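/- Monotonicity of relative bisimilarity: Let Γ = (C, A, Δ) be a normed BPA system and R1 ⊆ R2 ⊆ C_G. Then for all processes α, β: if α ≃_{R1} β then α ≃_{R2} β. -/

import Mathlib

open Relation

/-- A BPA system over constants `C` and actions `A`: a distinguished silent
action `tau`, and a finite set of transition rules `X —ℓ→ α`, where `C` and
`A` are finite. -/
structure BPA (C A : Type) where
  tau : A
  rules : Set (C × A × List C)
  finC : Finite C
  finA : Finite A
  finRules : rules.Finite

namespace BPA

variable {C A : Type}

/-- One-step labelled transition between processes.  Processes are strings
over `C` (lists, with the leftmost constant acting first). -/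
def Step (Γ : BPA C A) (ℓ : A) (p q : List C) : Prop :=
  ∃ X γ β, (X, ℓ, γ) ∈ Γ.rules ∧ p = X :: β ∧ q = γ ++ β

/-- A transition carrying an arbitrary label. -/
def AnyStep (Γ : BPA C A) (p q : List C) : Prop := ∃ ℓ, Γ.Step ℓ p q

/-- `⟹` : the reflexive transitive closure of silent steps. -/
def TauStar (Γ : BPA C A) : List C → List C → Prop := ReflTransGen (Γ.Step Γ.tau)

/-- A process is normed if it can reach the empty process `ε`. -/
def NormedProc (Γ : BPA C A) (p : List C) : Prop := ReflTransGen Γ.AnyStep p []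

/-- The BPA system is normed. -/
def Normed (Γ : BPA C A) : Prop := ∀ X : C, Γ.NormedProc [X]

/-- A chain of `s`-steps starting at `start` in which every visited state is
related by `r` to the process `anchor`. -/
def RelChain (s : List C → List C → Prop) (r : List C → List C → Prop)
    (anchor : List C) : List C → List C → Prop :=
  ReflTransGen fun x y => s x y ∧ r anchor y

/-- Branching bisimulation (an equivalence relation by convention). -/
def IsBranchingBisim (Γ : BPA C A) (r : List C → List C → Prop) : Prop :=
  Equivalence r ∧ ∀ α β, r α β →
    ((∀ a, a ≠ Γ.tau → ∀ α', Γ.Step a α α' →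
        ∃ β'' β', RelChain (Γ.Step Γ.tau) r β β β'' ∧ Γ.Step a β'' β' ∧ r α' β') ∧
     (∀ α', Γ.Step Γ.tau α α' → ¬ r α α' →
        ∃ β'' β', RelChain (Γ.Step Γ.tau) r β β β'' ∧ Γ.Step Γ.tau β'' β' ∧
          ¬ r β'' β' ∧ r α' β'))

/-- Branching bisimilarity `≃` : the largest branching bisimulation. -/
def Bisim (Γ : BPA C A) (α β : List C) : Prop :=
  ∃ r, Γ.IsBranchingBisim r ∧ r α β

/-- A ground process: it can silently reach `ε`. -/
def Ground (Γ : BPA C A) (p : List C) : Prop := Γ.TauStar p []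

/-- The set `C_G` of ground constants. -/
def GroundC (Γ : BPA C A) : Set C := {X | Γ.Ground [X]}

/-- `R`-equality `=_R`: the two processes differ only in suffixes over `R`. -/
def REq (R : Set C) (α β : List C) : Prop :=
  ∃ ζ a b, α = ζ ++ a ∧ β = ζ ++ b ∧ (∀ X ∈ a, X ∈ R) ∧ (∀ X ∈ b, X ∈ R)

open Classical in
/-- The `R`-normal form `α_R` of a process: delete the maximal suffix over `R`. -/
noncomputable def nf (R : Set C) (α : List C) : List C :=
  (α.reverse.dropWhile fun X => decide (X ∈ R)).reverse

/-- A process is in `R`-normal form. -/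
def InNF (R : Set C) (α : List C) : Prop := nf R α = α

/-- The `R`-transition relation `—ℓ→_R` between `R`-normal forms. -/
def StepR (Γ : BPA C A) (R : Set C) (ℓ : A) (ζ η : List C) : Prop :=
  ∃ α β, ζ = nf R α ∧ η = nf R β ∧ Γ.Step ℓ α β

/-- `⟹_R`. -/
def TauStarR (Γ : BPA C A) (R : Set C) : List C → List C → Prop :=
  ReflTransGen (Γ.StepR R Γ.tau)

/-- `R`-bisimulation: an equivalence relation containing `=_R` satisfying
ground preservation and the relativized branching transfer conditions. -/
def IsRBisim (Γ : BPA C A) (R : Set C) (r : List C → List C → Prop) : Prop :=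
  Equivalence r ∧ (∀ α β, REq R α β → r α β) ∧
  ∀ α β, r α β →
    ((Γ.TauStar α [] → Γ.TauStar β []) ∧
     (∀ α', Γ.Step Γ.tau α α' → ¬ r α α' →
        ∃ β'' β', RelChain (Γ.StepR R Γ.tau) r β (nf R β) β'' ∧
          Γ.StepR R Γ.tau β'' β' ∧ ¬ r β'' β' ∧ r α' β') ∧
     (∀ a, a ≠ Γ.tau → ∀ α', Γ.Step a α α' →
        ∃ β'' β', RelChain (Γ.StepR R Γ.tau) r β (nf R β) β'' ∧
          Γ.StepR R a β'' β' ∧ r α' β'))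

/-- `R`-bisimilarity `≃_R` : the largest `R`-bisimulation. -/
def RBisim (Γ : BPA C A) (R : Set C) (α β : List C) : Prop :=
  ∃ r, Γ.IsRBisim R r ∧ r α β

/-- `Id_R = {X ∈ C : X ≃_R ε}`. -/
def IdR (Γ : BPA C A) (R : Set C) : Set C := {X | Γ.RBisim R [X] []}

/-- `Rd_R(γ) = {X ∈ C : Xγ ≃_R γ}`. -/
def RdR (Γ : BPA C A) (R : Set C) (γ : List C) : Set C :=
  {X | Γ.RBisim R (X :: γ) γ}

/-- An admissible reference set: `R = Id_R`. -/
def Admissible (Γ : BPA C A) (R : Set C) : Prop := R = Γ.IdR R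

end BPA

/-!
Identify processes with their `R₂`-normal forms and let them move by `—ℓ→_{R₂}`. On this
quotient take semi-branching bisimilarity, which (unlike the image of an arbitrary relation)
is an equivalence with the stuttering property. Pulled back along `nf R₂` it is an
`R₂`-bisimulation as soon as `R₂ ⊆ C_G`: a quotient move of a class other than `ε` is
performed by every representative, and a class that reaches `ε` silently consists of ground
processes. On the other hand the image of an `R₁`-bisimulation is a semi-branching simulation
on the quotient, because `R₁`-moves become `R₂`-moves and members of the class `ε` can
silently reach `ε` and copy any move made there.
-/

section SemiBranching

variable {S L : Type*} (T : L → S → S → Prop) (τ : L)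

def IsSemiBranchingSim (r : S → S → Prop) : Prop :=
  ∀ ⦃u v⦄, r u v → ∀ ℓ u', T ℓ u u' →
    ∃ vh v', ReflTransGen (T τ) v vh ∧ ((ℓ = τ ∧ v' = vh) ∨ T ℓ vh v') ∧
      r u vh ∧ r u' v'

def SemiBranchingBisim (u v : S) : Prop :=
  ∃ r, IsSemiBranchingSim T τ r ∧ IsSemiBranchingSim T τ (flip r) ∧ r u v

variable {T τ} {r r' : S → S → Prop} {u v w : S}

theorem IsSemiBranchingSim.eq : IsSemiBranchingSim T τ (@Eq S) := by
  rintro u _ rfl ℓ u' hstep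
  exact ⟨u, u', .refl, Or.inr hstep, rfl, rfl⟩

theorem IsSemiBranchingSim.exists_reflTransGen (hr : IsSemiBranchingSim T τ r) {y yh : S}
    (hpath : ReflTransGen (T τ) y yh) (hyv : r y v) :
    ∃ vb, ReflTransGen (T τ) v vb ∧ r yh vb := by
  induction hpath using ReflTransGen.head_induction_on generalizing v with
  | refl => exact ⟨v, .refl, hyv⟩
  | head hstep _ ih =>
    obtain ⟨vh, v', hvh, hmove, -, hv'⟩ := hr hyv _ _ hstep
    obtain ⟨vb, hvb, hrel⟩ := ih hv'
    refine ⟨vb, .trans ?_ hvb, hrel⟩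
    rcases hmove with ⟨-, rfl⟩ | hmove
    exacts [hvh, hvh.tail hmove]

theorem IsSemiBranchingSim.comp (hr : IsSemiBranchingSim T τ r)
    (hr' : IsSemiBranchingSim T τ r') : IsSemiBranchingSim T τ (Relation.Comp r r') := by
  rintro u w ⟨v, huv, hvw⟩ ℓ u' hstep
  obtain ⟨vh, v', hvh, hmove, huvh, hu'v'⟩ := hr huv ℓ u' hstep
  obtain ⟨wb, hwb, hvhwb⟩ := hr'.exists_reflTransGen hvh hvw
  rcases hmove with ⟨rfl, rfl⟩ | hmove
  · exact ⟨wb, wb, hwb, Or.inl ⟨rfl, rfl⟩, ⟨_, huvh, hvhwb⟩, ⟨_, hu'v', hvhwb⟩⟩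
  · obtain ⟨wh, w', hwh, hmove', hvhwh, hv'w'⟩ := hr' hvhwb ℓ v' hmove
    exact ⟨wh, w', hwb.trans hwh, hmove', ⟨vh, huvh, hvhwh⟩, ⟨v', hu'v', hv'w'⟩⟩

theorem SemiBranchingBisim.of_symm (hr : IsSemiBranchingSim T τ r)
    (hsymm : ∀ ⦃a b⦄, r a b → r b a) (huv : r u v) : SemiBranchingBisim T τ u v := by
  have hflip : flip r = r := funext₂ fun a b => propext ⟨fun h => hsymm h, fun h => hsymm h⟩
  exact ⟨r, hr, hflip ▸ hr, huv⟩

theorem SemiBranchingBisim.equivalence : Equivalence (SemiBranchingBisim T τ) where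
  refl _ := .of_symm .eq (fun _ _ => Eq.symm) rfl
  symm := fun ⟨r, hr, hflip, huv⟩ => ⟨flip r, hflip, hr, huv⟩
  trans := fun ⟨r, hr, hrflip, huv⟩ ⟨r', hr', hrflip', hvw⟩ =>
    ⟨Relation.Comp r r', hr.comp hr', Relation.flip_comp ▸ hrflip'.comp hrflip,
      ⟨_, huv, hvw⟩⟩

theorem SemiBranchingBisim.isSemiBranchingSim :
    IsSemiBranchingSim T τ (SemiBranchingBisim T τ) := by
  rintro u v ⟨r, hr, hrflip, huv⟩ ℓ u' hstep
  obtain ⟨vh, v', hvh, hmove, huvh, hu'v'⟩ := hr huv ℓ u' hstep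
  exact ⟨vh, v', hvh, hmove, ⟨r, hr, hrflip, huvh⟩, ⟨r, hr, hrflip, hu'v'⟩⟩

theorem SemiBranchingBisim.stuttering {vh x : S} (hbisim : SemiBranchingBisim T τ v vh)
    (hvx : ReflTransGen (T τ) v x) (hxvh : ReflTransGen (T τ) x vh) :
    SemiBranchingBisim T τ v x := by
  let between (a : S) : Prop := ReflTransGen (T τ) v a ∧ ReflTransGen (T τ) a vh
  let Q (a b : S) : Prop :=
    SemiBranchingBisim T τ a b ∨ (b = v ∧ between a) ∨ (a = v ∧ between b)
  have hQsymm : ∀ ⦃a b⦄, Q a b → Q b a := by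
    rintro a b (h | h | h)
    exacts [Or.inl (equivalence.symm h), Or.inr (Or.inr h), Or.inr (Or.inl h)]
  have hQ : IsSemiBranchingSim T τ Q := by
    rintro a b (h | ⟨rfl, hva, -⟩ | ⟨rfl, -, hbvh⟩) ℓ a' hstep
    · obtain ⟨bh, b', hbh, hmove, habh, ha'b'⟩ := isSemiBranchingSim h ℓ a' hstep
      exact ⟨bh, b', hbh, hmove, Or.inl habh, Or.inl ha'b'⟩
    · -- `v` silently walks to `a` and copies the move
      exact ⟨a, a', hva, Or.inr hstep, Or.inl (equivalence.refl a),
        Or.inl (equivalence.refl a')⟩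
    · -- `b` silently walks to `vh`, which answers as `v` does
      obtain ⟨bh, b', hbh, hmove, habh, ha'b'⟩ := isSemiBranchingSim hbisim ℓ a' hstep
      exact ⟨bh, b', hbvh.trans hbh, hmove, Or.inl habh, Or.inl ha'b'⟩
  exact .of_symm hQ hQsymm (Or.inr (Or.inr ⟨rfl, hvx, hxvh⟩))

theorem SemiBranchingBisim.reflTransGen_of_reflTransGen {vh : S}
    (hbisim : SemiBranchingBisim T τ v vh) (hpath : ReflTransGen (T τ) v vh) :
    ReflTransGen (fun a b => T τ a b ∧ SemiBranchingBisim T τ v b) v vh := by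
  suffices ∀ x, ReflTransGen (T τ) v x → ReflTransGen (T τ) x vh →
      ReflTransGen (fun a b => T τ a b ∧ SemiBranchingBisim T τ v b) x vh from
    this v .refl hpath
  intro x hvx hxvh
  induction hxvh using ReflTransGen.head_induction_on with
  | refl => exact .refl
  | head hstep hrest ih =>
    have hvc := hvx.tail hstep
    exact .head ⟨hstep, hbisim.stuttering hvc hrest⟩ (ih hvc)

end SemiBranching

namespace BPA

variable {C A : Type}

section NormalForm

variable {R R₁ R₂ : Set C} {α β : List C}

theorem exists_eq_nf_append (R : Set C) (α : List C) :
    ∃ s, α = nf R α ++ s ∧ ∀ X ∈ s, X ∈ R := by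
  classical
  exact ⟨α.rtakeWhile fun X => decide (X ∈ R), List.rdropWhile_append_rtakeWhile.symm,
    fun X hX => by simpa using List.mem_rtakeWhile_imp hX⟩

theorem nf_append_of_forall_mem {s : List C} (hs : ∀ X ∈ s, X ∈ R) (α : List C) :
    nf R (α ++ s) = nf R α := by
  unfold nf
  rw [List.reverse_append, List.dropWhile_append_of_pos (by simpa using hs)]

theorem nf_nf_of_subset (h : R₁ ⊆ R₂) (α : List C) : nf R₂ (nf R₁ α) = nf R₂ α := by
  obtain ⟨s, hα, hs⟩ := exists_eq_nf_append R₁ α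
  conv_rhs => rw [hα]
  exact (nf_append_of_forall_mem (fun X hX => h (hs X hX)) _).symm

theorem nf_nf (α : List C) : nf R (nf R α) = nf R α :=
  nf_nf_of_subset subset_rfl α

theorem forall_mem_of_nf_eq_nil (h : nf R α = []) : ∀ X ∈ α, X ∈ R := by
  obtain ⟨s, hα, hs⟩ := exists_eq_nf_append R α
  rw [h, List.nil_append] at hα
  exact hα ▸ hs

theorem REq.nf_eq (h : REq R α β) : nf R α = nf R β := by
  obtain ⟨ζ, a, b, rfl, rfl, ha, hb⟩ := h
  rw [nf_append_of_forall_mem ha, nf_append_of_forall_mem hb]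

theorem req_self_nf (R : Set C) (α : List C) : REq R α (nf R α) := by
  obtain ⟨s, hα, hs⟩ := exists_eq_nf_append R α
  exact ⟨nf R α, s, [], hα, (List.append_nil _).symm, hs, by simp⟩

end NormalForm

section Steps

variable {Γ : BPA C A} {R R₁ R₂ : Set C} {ℓ : A} {p q u u' s x : List C}

theorem Step.append_right (h : Γ.Step ℓ p q) (c : List C) : Γ.Step ℓ (p ++ c) (q ++ c) := by
  obtain ⟨X, γ, β, hrule, rfl, rfl⟩ := h
  exact ⟨X, γ, β ++ c, hrule, rfl, by simp⟩

theorem Step.exists_of_append (h : Γ.Step ℓ (u ++ s) q) (hu : u ≠ []) :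
    ∃ q₀, q = q₀ ++ s ∧ ∀ t, Γ.Step ℓ (u ++ t) (q₀ ++ t) := by
  obtain ⟨X, γ, β, hrule, hp, rfl⟩ := h
  obtain ⟨Y, u, rfl⟩ := List.exists_cons_of_ne_nil hu
  obtain ⟨rfl, rfl⟩ := List.cons_eq_cons.mp hp
  exact ⟨γ ++ u, by simp, fun t => ⟨Y, γ, u ++ t, hrule, rfl, by simp⟩⟩

theorem StepR.of_step (h : Γ.Step ℓ p q) : Γ.StepR R ℓ (nf R p) (nf R q) :=
  ⟨p, q, rfl, rfl, h⟩

theorem StepR.nf_right (h : Γ.StepR R ℓ u u') : nf R u' = u' := by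
  obtain ⟨p, q, -, rfl, -⟩ := h
  exact nf_nf q

theorem StepR.of_subset (h12 : R₁ ⊆ R₂) (h : Γ.StepR R₁ ℓ u u') :
    Γ.StepR R₂ ℓ (nf R₂ u) (nf R₂ u') := by
  obtain ⟨p, q, rfl, rfl, hpq⟩ := h
  rw [nf_nf_of_subset h12, nf_nf_of_subset h12]
  exact .of_step hpq

/-- Only the leftmost constant acts, and it survives normalisation unless the class is `ε`. -/
theorem StepR.exists_step (h : Γ.StepR R ℓ (nf R x) u') (hx : nf R x ≠ []) :
    ∃ x', Γ.Step ℓ x x' ∧ nf R x' = u' := by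
  obtain ⟨m, n, hm, rfl, hmn⟩ := h
  obtain ⟨sm, hmdec, hsm⟩ := exists_eq_nf_append R m
  obtain ⟨sx, hxdec, hsx⟩ := exists_eq_nf_append R x
  rw [hmdec, ← hm] at hmn
  obtain ⟨n₀, rfl, hn₀⟩ := hmn.exists_of_append hx
  refine ⟨n₀ ++ sx, hxdec ▸ hn₀ sx, ?_⟩
  rw [nf_append_of_forall_mem hsx, nf_append_of_forall_mem hsm]

theorem nf_eq_of_reflTransGen_stepR (h : ReflTransGen (Γ.StepR R ℓ) (nf R x) u) :
    nf R u = u := by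
  rcases h.cases_tail with rfl | ⟨_, -, hstep⟩
  exacts [nf_nf x, hstep.nf_right]

theorem TauStar.append_right (h : Γ.TauStar p q) (c : List C) :
    Γ.TauStar (p ++ c) (q ++ c) :=
  ReflTransGen.lift (· ++ c) (fun _ _ hstep => Step.append_right hstep c) _ _ h

theorem tauStar_nil_of_forall_mem_groundC (h : ∀ X ∈ s, X ∈ Γ.GroundC) :
    Γ.TauStar s [] := by
  induction s with
  | nil => exact .refl
  | cons X t ih =>
    exact (TauStar.append_right (h X List.mem_cons_self) t).trans
      (ih fun Y hY => h Y (List.mem_cons_of_mem X hY))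

theorem tauStar_nil_of_nf_eq_nil (hR : R ⊆ Γ.GroundC) (hx : nf R x = []) : Γ.TauStar x [] :=
  tauStar_nil_of_forall_mem_groundC fun X hX => hR (forall_mem_of_nf_eq_nil hx X hX)

theorem tauStar_nil_of_stepR_path (hR : R ⊆ Γ.GroundC)
    (hpath : ReflTransGen (Γ.StepR R Γ.tau) u []) (hx : nf R x = u) : Γ.TauStar x [] := by
  induction hpath using ReflTransGen.head_induction_on generalizing x with
  | refl => exact tauStar_nil_of_nf_eq_nil hR hx
  | @head u u₁ hstep _ ih =>
    subst hx
    by_cases hu : nf R x = []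
    · exact tauStar_nil_of_nf_eq_nil hR hu
    · obtain ⟨x', hx', hnf⟩ := hstep.exists_step hu
      exact .head hx' (ih hnf)

end Steps

section Quotient

variable {Γ : BPA C A} {R R₁ R₂ : Set C} {r : List C → List C → Prop}
  {ℓ : A} {α α' β x y : List C}

/-- The `R`-quotient, with an extra `none`-loop at `ε`: bisimilarity on it then remembers
which classes can silently reach `ε`, as condition (1) of an `R`-bisimulation demands. -/
def QuotLTS (Γ : BPA C A) (R : Set C) : Option A → List C → List C → Prop
  | some a => Γ.StepR R a
  | none => fun u v => u = [] ∧ v = []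

def QuotBisim (Γ : BPA C A) (R : Set C) (α β : List C) : Prop :=
  SemiBranchingBisim (Γ.QuotLTS R) (some Γ.tau) (nf R α) (nf R β)

theorem QuotBisim.equivalence : Equivalence (Γ.QuotBisim R) :=
  SemiBranchingBisim.equivalence.comap (nf R)

theorem quotBisim_of_req (h : REq R α β) : Γ.QuotBisim R α β := by
  rw [QuotBisim, h.nf_eq]
  exact SemiBranchingBisim.equivalence.refl _

theorem QuotBisim.tauStar_nil (hR : R ⊆ Γ.GroundC) (h : Γ.QuotBisim R α β)
    (hα : Γ.TauStar α []) : Γ.TauStar β [] := by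
  have hpath : ReflTransGen (Γ.QuotLTS R (some Γ.tau)) (nf R α) [] :=
    ReflTransGen.lift (nf R) (fun _ _ => StepR.of_step) _ _ hα
  obtain ⟨vb, hvb, hbisim⟩ :=
    SemiBranchingBisim.isSemiBranchingSim.exists_reflTransGen hpath h
  obtain ⟨vh, _, hvh, hmove, -⟩ :=
    SemiBranchingBisim.isSemiBranchingSim hbisim none [] ⟨rfl, rfl⟩
  obtain ⟨rfl, -⟩ : vh = [] ∧ _ := hmove.resolve_left nofun
  exact tauStar_nil_of_stepR_path hR (hvb.trans hvh) rfl

theorem QuotBisim.exists_response (h : Γ.QuotBisim R α β) (hstep : Γ.Step ℓ α α') :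
    ∃ β'' β', RelChain (Γ.StepR R Γ.tau) (Γ.QuotBisim R) β (nf R β) β'' ∧
      ((ℓ = Γ.tau ∧ β' = β'') ∨ Γ.StepR R ℓ β'' β') ∧
      Γ.QuotBisim R α β'' ∧ Γ.QuotBisim R α' β' := by
  obtain ⟨vh, v', hpath, hmove, hvh, hv'⟩ :=
    SemiBranchingBisim.isSemiBranchingSim h (some ℓ) _ (StepR.of_step hstep)
  have hnf_vh : nf R vh = vh := nf_eq_of_reflTransGen_stepR hpath
  have hnf_v' : nf R v' = v' := by
    rcases hmove with ⟨-, rfl⟩ | hmove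
    exacts [hnf_vh, StepR.nf_right hmove]
  have hchain := (SemiBranchingBisim.equivalence.trans
    (SemiBranchingBisim.equivalence.symm h) hvh).reflTransGen_of_reflTransGen hpath
  refine ⟨vh, v', ReflTransGen.mono ?_ _ _ hchain, ?_, ?_, ?_⟩
  · rintro a b ⟨hab, hb⟩
    exact ⟨hab, by rwa [QuotBisim, StepR.nf_right hab]⟩
  · simpa only [Option.some_inj, QuotLTS] using hmove
  · rwa [QuotBisim, hnf_vh]
  · rwa [QuotBisim, hnf_v']

theorem isRBisim_quotBisim (hR : R ⊆ Γ.GroundC) : Γ.IsRBisim R (Γ.QuotBisim R) := by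
  have heqv := QuotBisim.equivalence (Γ := Γ) (R := R)
  refine ⟨heqv, fun _ _ => quotBisim_of_req, fun α β h => ⟨h.tauStar_nil hR, ?_, ?_⟩⟩
  · intro α' hstep hαα'
    obtain ⟨β'', β', hchain, hmove, hαβ'', hα'β'⟩ := h.exists_response hstep
    rcases hmove with ⟨-, rfl⟩ | hmove
    · exact absurd (heqv.trans hαβ'' (heqv.symm hα'β')) hαα'
    · refine ⟨β'', β', hchain, hmove, fun hβ''β' => hαα' ?_, hα'β'⟩
      exact heqv.trans hαβ'' (heqv.trans hβ''β' (heqv.symm hα'β'))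
  · intro a ha α' hstep
    obtain ⟨β'', β', hchain, hmove, -, hα'β'⟩ := h.exists_response hstep
    exact ⟨β'', β', hchain, hmove.resolve_left fun h => ha h.1, hα'β'⟩

theorem IsRBisim.exists_response (hr : Γ.IsRBisim R r) (hxy : r x y) {x' : List C}
    (hstep : Γ.Step ℓ x x') (hmove : ¬ (ℓ = Γ.tau ∧ r x x')) :
    ∃ β'' β', RelChain (Γ.StepR R Γ.tau) r y (nf R y) β'' ∧
      Γ.StepR R ℓ β'' β' ∧ r x' β' := by
  by_cases hℓ : ℓ = Γ.tau
  · subst hℓ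
    obtain ⟨β'', β', hchain, hpivot, -, hrel⟩ :=
      (hr.2.2 x y hxy).2.1 x' hstep fun hxx' => hmove ⟨rfl, hxx'⟩
    exact ⟨β'', β', hchain, hpivot, hrel⟩
  · exact (hr.2.2 x y hxy).2.2 ℓ hℓ x' hstep

theorem IsRBisim.reflTransGen_stepR_of_relChain (h12 : R₁ ⊆ R₂) (hr : Γ.IsRBisim R₁ r)
    {β'' : List C} (hchain : RelChain (Γ.StepR R₁ Γ.tau) r y (nf R₁ y) β'') :
    ReflTransGen (Γ.StepR R₂ Γ.tau) (nf R₂ y) (nf R₂ β'') ∧ r y β'' := by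
  constructor
  · rw [← nf_nf_of_subset h12 y]
    exact ReflTransGen.lift (nf R₂) (fun _ _ h => h.1.of_subset h12) _ _ hchain
  · rcases hchain.cases_tail with rfl | ⟨_, -, -, hyβ''⟩
    exacts [hr.2.1 _ _ (req_self_nf R₁ y), hyβ'']

theorem IsRBisim.reflTransGen_quotLTS_nil (hR : R₂ ⊆ Γ.GroundC) (hr : Γ.IsRBisim R₁ r)
    (hxy : r x y) (hx : nf R₂ x = []) :
    ReflTransGen (Γ.QuotLTS R₂ (some Γ.tau)) (nf R₂ y) [] :=
  ReflTransGen.lift (nf R₂) (fun _ _ => StepR.of_step) _ _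
    ((hr.2.2 x y hxy).1 (tauStar_nil_of_nf_eq_nil hR hx))

theorem IsRBisim.isSemiBranchingSim_map (h12 : R₁ ⊆ R₂) (h2 : R₂ ⊆ Γ.GroundC)
    (hr : Γ.IsRBisim R₁ r) :
    IsSemiBranchingSim (Γ.QuotLTS R₂) (some Γ.tau) (Relation.Map r (nf R₂) (nf R₂)) := by
  have hself (u : List C) (hu : nf R₂ u = u) : Relation.Map r (nf R₂) (nf R₂) u u :=
    ⟨u, u, hr.1.refl u, hu, hu⟩
  rintro _ _ ⟨x, y, hxy, rfl, rfl⟩ (_ | ℓ) u' hstep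
  · obtain ⟨hx, rfl⟩ := hstep
    exact ⟨[], [], hr.reflTransGen_quotLTS_nil h2 hxy hx, Or.inr ⟨rfl, rfl⟩,
      ⟨x, x, hr.1.refl x, rfl, hx⟩, hself [] rfl⟩
  by_cases hx : nf R₂ x = []
  · -- the answer walks to `ε` and repeats the move made from there
    exact ⟨[], u', hr.reflTransGen_quotLTS_nil h2 hxy hx, Or.inr (hx ▸ hstep),
      ⟨x, x, hr.1.refl x, rfl, hx⟩, hself u' (StepR.nf_right hstep)⟩
  obtain ⟨x', hx', rfl⟩ := StepR.exists_step hstep hx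
  by_cases hstutter : ℓ = Γ.tau ∧ r x x'
  · obtain ⟨rfl, hxx'⟩ := hstutter
    exact ⟨nf R₂ y, nf R₂ y, .refl, Or.inl ⟨rfl, rfl⟩, ⟨x, y, hxy, rfl, rfl⟩,
      ⟨x', y, hr.1.trans (hr.1.symm hxx') hxy, rfl, rfl⟩⟩
  obtain ⟨β'', β', hchain, hpivot, hx'β'⟩ := hr.exists_response hxy hx' hstutter
  obtain ⟨hpath, hyβ''⟩ := hr.reflTransGen_stepR_of_relChain h12 hchain
  exact ⟨nf R₂ β'', nf R₂ β', hpath, Or.inr (hpivot.of_subset h12),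
    ⟨x, β'', hr.1.trans hxy hyβ'', rfl, rfl⟩, ⟨x', β', hx'β', rfl, rfl⟩⟩

theorem IsRBisim.quotBisim (h12 : R₁ ⊆ R₂) (h2 : R₂ ⊆ Γ.GroundC)
    (hr : Γ.IsRBisim R₁ r) (hxy : r x y) : Γ.QuotBisim R₂ x y :=
  .of_symm (hr.isSemiBranchingSim_map h12 h2)
    (fun _ _ ⟨a, b, hab, ha, hb⟩ => ⟨b, a, hr.1.symm hab, hb, ha⟩) ⟨x, y, hxy, rfl, rfl⟩

end Quotient

end BPA

theorem RBisim_monotone_general {C A : Type} (Γ : BPA C A)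
    (R₁ R₂ : Set C) (h12 : R₁ ⊆ R₂) (h2 : R₂ ⊆ Γ.GroundC)
    (α β : List C) (h : Γ.RBisim R₁ α β) : Γ.RBisim R₂ α β := by
  obtain ⟨r, hr, hαβ⟩ := h
  exact ⟨Γ.QuotBisim R₂, BPA.isRBisim_quotBisim h2, hr.quotBisim h12 h2 hαβ⟩

/-- Monotonicity of relative bisimilarity in the reference set. -/
theorem RBisim_monotone {C A : Type} (Γ : BPA C A) (hΓ : Γ.Normed)
    (R₁ R₂ : Set C) (h12 : R₁ ⊆ R₂) (h2 : R₂ ⊆ Γ.GroundC)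
    (α β : List C) (h : Γ.RBisim R₁ α β) : Γ.RBisim R₂ α β :=
  RBisim_monotone_general Γ R₁ R₂ h12 h2 α β h
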